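/- arXiv:2305.07720 — 4 statements merged into one kernel-verified Lean document; each statement's English description precedes it below -/
import Mathlib

section
/- Let n and k be positive integers. Let V be a unitary complex matrix indexed by (Fin n × Fin k), U a unitary complex matrix indexed by Fin n, and Π a nonzero complex matrix indexed by Fin k with Πᴴ = Π and Π * Π = Π (a nonzero orthogonal projector). If V * (1 ⊗ Π) = U ⊗ Π, then also (1 ⊗ Π) * V = U ⊗ Π, where ⊗ is the Kronecker product and 1 is the n×n identity matrix. -/
open Matrix
open scoped Kronecker

/- A unitary `u` with `u p = w` and `w w⋆ = p` satisfies `u p u⋆ = (u p)(u p)⋆ = p`, so it commutes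
with `p`, whence `p u = u p = w`. For `p = 1 ⊗ Π` and `w = U ⊗ Π` the identity `w w⋆ = p` is
`U U⋆ ⊗ Π Π⋆ = 1 ⊗ Π`. -/

theorem IsStarProjection.kronecker {R m n : Type*} [CommSemiring R] [StarRing R]
    [Fintype m] [Fintype n] {A : Matrix m m R} {B : Matrix n n R}
    (hA : IsStarProjection A) (hB : IsStarProjection B) : IsStarProjection (A ⊗ₖ B) where
  isIdempotentElem := by
    rw [IsIdempotentElem, ← mul_kronecker_mul, hA.isIdempotentElem.eq, hB.isIdempotentElem.eq]
  isSelfAdjoint := by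
    rw [IsSelfAdjoint, star_eq_conjTranspose, conjTranspose_kronecker,
      ← star_eq_conjTranspose, ← star_eq_conjTranspose, hA.isSelfAdjoint.star_eq,
      hB.isSelfAdjoint.star_eq]

theorem IsStarProjection.commute_of_mem_unitary {R : Type*} [Monoid R] [StarMul R] {p u : R}
    (hp : IsStarProjection p) (hu : u ∈ unitary R) (h : u * p * star (u * p) = p) :
    Commute u p := by
  refine (commute_unitary_iff_star_right_conjugate hu).2 ?_
  calc u * p * star u = u * p * star p * star u := by
        rw [hp.isSelfAdjoint.star_eq, mul_assoc u p p, hp.isIdempotentElem.eq]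
    _ = p := by rw [mul_assoc (u * p), ← star_mul, h]

theorem IsStarProjection.mul_eq_of_mem_unitary {R : Type*} [Monoid R] [StarMul R] {p u w : R}
    (hp : IsStarProjection p) (hu : u ∈ unitary R) (hw : w * star w = p) (h : u * p = w) :
    p * u = w := by
  rw [← (hp.commute_of_mem_unitary hu (by rw [h, hw])).eq, h]

theorem catalytic_condition_leftside_general (n k : ℕ)
    (V : Matrix (Fin n × Fin k) (Fin n × Fin k) ℂ)
    (U : Matrix (Fin n) (Fin n) ℂ) (P : Matrix (Fin k) (Fin k) ℂ)
    (hV : V ∈ Matrix.unitaryGroup (Fin n × Fin k) ℂ)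
    (hU : U ∈ Matrix.unitaryGroup (Fin n) ℂ)
    (hP_herm : Pᴴ = P) (hP_idem : P * P = P)
    (hcat : V * Matrix.kroneckerMap (· * ·) (1 : Matrix (Fin n) (Fin n) ℂ) P
          = Matrix.kroneckerMap (· * ·) U P) :
    Matrix.kroneckerMap (· * ·) (1 : Matrix (Fin n) (Fin n) ℂ) P * V
      = Matrix.kroneckerMap (· * ·) U P := by
  have hP : IsStarProjection P := ⟨hP_idem, hP_herm⟩
  refine ((IsStarProjection.one _).kronecker hP).mul_eq_of_mem_unitary hV ?_ hcat
  rw [star_eq_conjTranspose, conjTranspose_kronecker, ← mul_kronecker_mul,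
    ← star_eq_conjTranspose, ← star_eq_conjTranspose, Unitary.mul_star_self_of_mem hU,
    hP.isSelfAdjoint.star_eq, hP_idem]

/-- Proposition `leftside`. If `V` and `U` are unitary, `Π` is a nonzero
orthogonal projector, and `V * (1 ⊗ Π) = U ⊗ Π`, then also `(1 ⊗ Π) * V = U ⊗ Π`. -/
theorem catalytic_condition_leftside (n k : ℕ) (hn : 0 < n) (hk : 0 < k)
    (V : Matrix (Fin n × Fin k) (Fin n × Fin k) ℂ)
    (U : Matrix (Fin n) (Fin n) ℂ) (P : Matrix (Fin k) (Fin k) ℂ)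
    (hV : V ∈ Matrix.unitaryGroup (Fin n × Fin k) ℂ)
    (hU : U ∈ Matrix.unitaryGroup (Fin n) ℂ)
    (hP_ne : P ≠ 0) (hP_herm : Pᴴ = P) (hP_idem : P * P = P)
    (hcat : V * Matrix.kroneckerMap (· * ·) (1 : Matrix (Fin n) (Fin n) ℂ) P
          = Matrix.kroneckerMap (· * ·) U P) :
    Matrix.kroneckerMap (· * ·) (1 : Matrix (Fin n) (Fin n) ℂ) P * V
      = Matrix.kroneckerMap (· * ·) U P :=
  catalytic_condition_leftside_general n k V U P hV hU hP_herm hP_idem hcat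
end

section
/- Let R, S, T be subrings of ℂ, each closed under complex conjugation, with T ∩ R ⊆ S. If Φ₁ is a pre-embedding of dimension k₁ from T to S with catalytic projector Π₁, and Φ₂ is a pre-embedding of dimension k₂ from S to R with catalytic projector Π₂, then the family sending a matrix A with entries in T to Φ₂(Φ₁(A)), reindexed via the canonical identification of (ι × Fin k₁) × Fin k₂ with ι × Fin (k₁ * k₂), is a pre-embedding of dimension k₁ * k₂ from T to R, whose catalytic projector is Π₁ ⊗ Π₂ (a nonzero orthogonal projector). -/
open Matrix

/-- A *pre-embedding of dimension `k` from `S` to `R`* (for `S R : Subring ℂ`, each closed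
under complex conjugation): a family `toFun` assigning to every square complex matrix indexed
by a finite type `ι` (with all entries in `S`) a complex matrix indexed by `ι × Fin k` with all
entries in `R`, together with a fixed nonzero orthogonal projector `proj` on `Fin k` (the
catalytic projector), satisfying multiplicativity, additivity, unitality, compatibility with
conjugate transpose, compatibility with Kronecker products by matrices over `R ∩ S`, and the
catalytic condition `Φ(A) * (1 ⊗ Π) = A ⊗ Π`. -/
structure PreEmbedding (k : ℕ) (S R : Subring ℂ) : Type 1 where
  toFun : ∀ (ι : Type) [Fintype ι] [DecidableEq ι],
    Matrix ι ι ℂ → Matrix (ι × Fin k) (ι × Fin k) ℂ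
  proj : Matrix (Fin k) (Fin k) ℂ
  hS_conj : ∀ z ∈ S, (starRingEnd ℂ) z ∈ S
  hR_conj : ∀ z ∈ R, (starRingEnd ℂ) z ∈ R
  proj_ne_zero : proj ≠ 0
  proj_herm : proj.conjTranspose = proj
  proj_idem : proj * proj = proj
  mem_R : ∀ (ι : Type) [Fintype ι] [DecidableEq ι] (A : Matrix ι ι ℂ),
    (∀ i j, A i j ∈ S) → ∀ p q, toFun ι A p q ∈ R
  map_mul : ∀ (ι : Type) [Fintype ι] [DecidableEq ι] (A B : Matrix ι ι ℂ),
    (∀ i j, A i j ∈ S) → (∀ i j, B i j ∈ S) → toFun ι (A * B) = toFun ι A * toFun ι B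
  map_add : ∀ (ι : Type) [Fintype ι] [DecidableEq ι] (A B : Matrix ι ι ℂ),
    (∀ i j, A i j ∈ S) → (∀ i j, B i j ∈ S) → toFun ι (A + B) = toFun ι A + toFun ι B
  map_one : ∀ (ι : Type) [Fintype ι] [DecidableEq ι], toFun ι (1 : Matrix ι ι ℂ) = 1
  map_conjTranspose : ∀ (ι : Type) [Fintype ι] [DecidableEq ι] (A : Matrix ι ι ℂ),
    (∀ i j, A i j ∈ S) → toFun ι Aᴴ = (toFun ι A)ᴴ
  map_kronecker : ∀ (ι κ : Type) [Fintype ι] [DecidableEq ι] [Fintype κ] [DecidableEq κ]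
    (C : Matrix ι ι ℂ) (A : Matrix κ κ ℂ),
    (∀ i j, C i j ∈ R) → (∀ i j, C i j ∈ S) → (∀ i j, A i j ∈ S) →
    toFun (ι × κ) (Matrix.kroneckerMap (· * ·) C A) =
      Matrix.reindex (Equiv.prodAssoc ι κ (Fin k)).symm (Equiv.prodAssoc ι κ (Fin k)).symm
        (Matrix.kroneckerMap (· * ·) C (toFun κ A))
  catalytic : ∀ (ι : Type) [Fintype ι] [DecidableEq ι] (A : Matrix ι ι ℂ),
    (∀ i j, A i j ∈ S) →
    toFun ι A * Matrix.kroneckerMap (· * ·) (1 : Matrix ι ι ℂ) proj =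
      Matrix.kroneckerMap (· * ·) A proj

/-- `Φ₀ s`: the pre-embedding applied to the `1 × 1` matrix with entry `s`, reindexed to a
matrix indexed by `Fin k`. -/
def PreEmbedding.apply0 {k : ℕ} {S R : Subring ℂ} (E : PreEmbedding k S R) (s : ℂ) :
    Matrix (Fin k) (Fin k) ℂ :=
  Matrix.reindex (Equiv.punitProd (Fin k)) (Equiv.punitProd (Fin k))
    (E.toFun Unit (Matrix.of fun _ _ => s))

/-!
The composite inherits multiplicativity, additivity, unitality, compatibility with `ᴴ` and the
entry condition factor by factor, and `Π₁ ⊗ Π₂` is again a nonzero orthogonal projector.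
For the catalytic identity write `1 ⊗ Π₁ ⊗ Π₂ = (1 ⊗ Π₂) * ((1 ⊗ Π₁) ⊗ 1)` and apply the
catalytic identities of `Φ₂` and then `Φ₁`. Compatibility with `C ⊗ A` for `C` over `R ∩ T` needs
`Φ₂(C ⊗ Φ₁(A)) = C ⊗ Φ₂(Φ₁(A))` up to regrouping; the hypothesis `T ∩ R ⊆ S` puts `C` over
`R ∩ S`, and the regrouping is handled by a matrix-unit expansion of `Φ₁(A)`.
-/

open scoped Kronecker

abbrev prodProdFinEquiv (ι : Type*) (k₁ k₂ : ℕ) : (ι × Fin k₁) × Fin k₂ ≃ ι × Fin (k₁ * k₂) :=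
  (Equiv.prodAssoc ι (Fin k₁) (Fin k₂)).trans ((Equiv.refl ι).prodCongr finProdFinEquiv)

abbrev prodProdAssocEquiv (ι κ μ ν : Type*) : ι × ((κ × μ) × ν) ≃ ((ι × κ) × μ) × ν :=
  (Equiv.prodAssoc ι (κ × μ) ν).symm.trans ((Equiv.prodAssoc ι κ μ).symm.prodCongr (Equiv.refl ν))

namespace Matrix

variable {l m n p : Type*}

theorem kronecker_ne_zero {α : Type*} [MulZeroClass α] [NoZeroDivisors α]
    {A : Matrix l m α} {B : Matrix n p α} (hA : A ≠ 0) (hB : B ≠ 0) : A ⊗ₖ B ≠ 0 := by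
  obtain ⟨i, j, hij⟩ : ∃ i j, A i j ≠ 0 := by
    by_contra! h
    exact hA (ext h)
  obtain ⟨a, b, hab⟩ : ∃ a b, B a b ≠ 0 := by
    by_contra! h
    exact hB (ext h)
  intro h
  exact mul_ne_zero hij hab (congr_fun₂ h (i, a) (j, b))

theorem single_mem {α σ : Type*} [Zero α] [SetLike σ α] [ZeroMemClass σ α] [DecidableEq m]
    [DecidableEq n] {S : σ} {i : m} {j : n} {c : α} (hc : c ∈ S) (x : m) (y : n) :
    single i j c x y ∈ S := by
  rw [single_apply]
  split_ifs
  exacts [hc, zero_mem S]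

theorem reindex_add {α l' m' : Type*} [Add α] (e : m ≃ l') (e' : n ≃ m') (A B : Matrix m n α) :
    reindex e e' (A + B) = reindex e e' A + reindex e e' B :=
  rfl

theorem kronecker_reindex_finProdFinEquiv {α ι : Type*} [Semigroup α] {k₁ k₂ : ℕ}
    (A : Matrix ι ι α) (P : Matrix (Fin k₁) (Fin k₁) α) (Q : Matrix (Fin k₂) (Fin k₂) α) :
    A ⊗ₖ reindex finProdFinEquiv finProdFinEquiv (P ⊗ₖ Q) =
      reindex (prodProdFinEquiv ι k₁ k₂) (prodProdFinEquiv ι k₁ k₂) (A ⊗ₖ P ⊗ₖ Q) := by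
  rw [kroneckerMap_reindex_right, ← kronecker_assoc]
  rfl

end Matrix

namespace PreEmbedding

variable {k k₁ k₂ : ℕ} {R S T : Subring ℂ}

theorem map_zero (E : PreEmbedding k S R) (ι : Type) [Fintype ι] [DecidableEq ι] :
    E.toFun ι 0 = 0 := by
  have h := E.map_add ι 0 0 (fun _ _ => zero_mem S) (fun _ _ => zero_mem S)
  rwa [add_zero, left_eq_add] at h

theorem map_kronecker_kronecker (E : PreEmbedding k S R) {ι κ μ : Type} [Fintype ι]
    [DecidableEq ι] [Fintype κ] [DecidableEq κ] [Fintype μ] [DecidableEq μ]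
    (C : Matrix ι ι ℂ) (D : Matrix κ κ ℂ) (M : Matrix μ μ ℂ)
    (hCR : ∀ i j, C i j ∈ R) (hCS : ∀ i j, C i j ∈ S)
    (hDR : ∀ i j, D i j ∈ R) (hDS : ∀ i j, D i j ∈ S) (hM : ∀ i j, M i j ∈ S) :
    E.toFun ((ι × κ) × μ) (C ⊗ₖ D ⊗ₖ M) =
      reindex (prodProdAssocEquiv ι κ μ (Fin k)) (prodProdAssocEquiv ι κ μ (Fin k))
        (C ⊗ₖ E.toFun (κ × μ) (D ⊗ₖ M)) := by
  rw [E.map_kronecker _ _ (C ⊗ₖ D) M (fun _ _ => mul_mem (hCR _ _) (hDR _ _))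
      (fun _ _ => mul_mem (hCS _ _) (hDS _ _)) hM, E.map_kronecker _ _ _ _ hDR hDS hM]
  ext ⟨⟨⟨i, j⟩, a⟩, c⟩ ⟨⟨⟨i', j'⟩, a'⟩, c'⟩
  simp [mul_assoc]

/-- `Φ` is not assumed to commute with reindexing, so the regrouping is reached by expanding `N`
in matrix units `single (j, a) (j', a') c = single j j' 1 ⊗ₖ single a a' c` and applying
`map_kronecker` to the factor `C ⊗ₖ single j j' 1`, which has entries in `R ∩ S`. -/
theorem map_kronecker_assoc (E : PreEmbedding k S R) {ι κ μ : Type} [Fintype ι]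
    [DecidableEq ι] [Fintype κ] [DecidableEq κ] [Fintype μ] [DecidableEq μ]
    (C : Matrix ι ι ℂ) (N : Matrix (κ × μ) (κ × μ) ℂ)
    (hCR : ∀ i j, C i j ∈ R) (hCS : ∀ i j, C i j ∈ S) (hN : ∀ i j, N i j ∈ S) :
    E.toFun ((ι × κ) × μ)
        (reindex (Equiv.prodAssoc ι κ μ).symm (Equiv.prodAssoc ι κ μ).symm (C ⊗ₖ N)) =
      reindex (prodProdAssocEquiv ι κ μ (Fin k)) (prodProdAssocEquiv ι κ μ (Fin k))
        (C ⊗ₖ E.toFun (κ × μ) N) := by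
  let P : Matrix (κ × μ) (κ × μ) ℂ → Prop := fun N => (∀ i j, N i j ∈ S) ∧
    E.toFun ((ι × κ) × μ)
        (reindex (Equiv.prodAssoc ι κ μ).symm (Equiv.prodAssoc ι κ μ).symm (C ⊗ₖ N)) =
      reindex (prodProdAssocEquiv ι κ μ (Fin k)) (prodProdAssocEquiv ι κ μ (Fin k))
        (C ⊗ₖ E.toFun (κ × μ) N)
  have hzero : P 0 := ⟨fun _ _ => zero_mem S, by simp [E.map_zero]⟩
  have hadd : ∀ N N', P N → P N' → P (N + N') := by
    rintro N N' ⟨hN, h⟩ ⟨hN', h'⟩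
    refine ⟨fun i j => add_mem (hN i j) (hN' i j), ?_⟩
    rw [kronecker_add, reindex_add, E.map_add _ (reindex _ _ (C ⊗ₖ N)) (reindex _ _ (C ⊗ₖ N'))
      (fun _ _ => mul_mem (hCS _ _) (hN _ _)) (fun _ _ => mul_mem (hCS _ _) (hN' _ _)),
      h, h', E.map_add _ _ _ hN hN', kronecker_add, reindex_add]
  have hsingle : ∀ x y, P (single x y (N x y)) := by
    rintro ⟨j, a⟩ ⟨j', a'⟩
    have hunit := single_kronecker_single j j' a a' (1 : ℂ) (N (j, a) (j', a'))
    rw [one_mul] at hunit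
    refine ⟨single_mem (hN _ _), ?_⟩
    rw [← hunit, ← kronecker_assoc, ← reindex_symm, Equiv.symm_apply_apply]
    exact E.map_kronecker_kronecker C _ _ hCR hCS (single_mem (one_mem R))
      (single_mem (one_mem S)) (single_mem (hN _ _))
  rw [matrix_eq_sum_single N]
  exact (Finset.sum_induction _ P hadd hzero fun x _ =>
    Finset.sum_induction _ P hadd hzero fun y _ => hsingle x y).2

theorem reindex_comp_map_kronecker (hTR : T ⊓ R ≤ S) (E₁ : PreEmbedding k₁ T S)
    (E₂ : PreEmbedding k₂ S R) {ι κ : Type} [Fintype ι] [DecidableEq ι] [Fintype κ]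
    [DecidableEq κ] (C : Matrix ι ι ℂ) (A : Matrix κ κ ℂ)
    (hCR : ∀ i j, C i j ∈ R) (hCT : ∀ i j, C i j ∈ T) (hA : ∀ i j, A i j ∈ T) :
    reindex (prodProdFinEquiv (ι × κ) k₁ k₂) (prodProdFinEquiv (ι × κ) k₁ k₂)
        (E₂.toFun _ (E₁.toFun (ι × κ) (C ⊗ₖ A))) =
      reindex (Equiv.prodAssoc ι κ (Fin (k₁ * k₂))).symm
        (Equiv.prodAssoc ι κ (Fin (k₁ * k₂))).symm
        (C ⊗ₖ reindex (prodProdFinEquiv κ k₁ k₂) (prodProdFinEquiv κ k₁ k₂)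
          (E₂.toFun _ (E₁.toFun κ A))) := by
  have hCS : ∀ i j, C i j ∈ S := fun i j => hTR ⟨hCT i j, hCR i j⟩
  rw [E₁.map_kronecker _ _ C A hCS hCT hA,
    E₂.map_kronecker_assoc C _ hCR hCS (E₁.mem_R _ _ hA)]
  ext ⟨⟨i, j⟩, m⟩ ⟨⟨i', j'⟩, m'⟩
  simp

theorem reindex_comp_catalytic (E₁ : PreEmbedding k₁ T S) (E₂ : PreEmbedding k₂ S R)
    {ι : Type} [Fintype ι] [DecidableEq ι] (A : Matrix ι ι ℂ) (hA : ∀ i j, A i j ∈ T) :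
    reindex (prodProdFinEquiv ι k₁ k₂) (prodProdFinEquiv ι k₁ k₂)
        (E₂.toFun _ (E₁.toFun ι A)) *
        ((1 : Matrix ι ι ℂ) ⊗ₖ reindex finProdFinEquiv finProdFinEquiv (E₁.proj ⊗ₖ E₂.proj)) =
      A ⊗ₖ reindex finProdFinEquiv finProdFinEquiv (E₁.proj ⊗ₖ E₂.proj) := by
  let e := prodProdFinEquiv ι k₁ k₂
  calc _ = reindex e e (E₂.toFun _ (E₁.toFun ι A) * ((1 ⊗ₖ E₁.proj) ⊗ₖ E₂.proj)) := by
        rw [kronecker_reindex_finProdFinEquiv, ← coe_reindexAlgEquiv ℂ ℂ, ← _root_.map_mul]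
    _ = reindex e e (E₂.toFun _ (E₁.toFun ι A) * (1 ⊗ₖ E₂.proj) * ((1 ⊗ₖ E₁.proj) ⊗ₖ 1)) := by
        rw [mul_assoc, ← mul_kronecker_mul, one_mul, mul_one]
    _ = reindex e e ((A ⊗ₖ E₁.proj) ⊗ₖ E₂.proj) := by
        rw [E₂.catalytic _ _ (E₁.mem_R _ _ hA), ← mul_kronecker_mul, E₁.catalytic _ _ hA, mul_one]
    _ = _ := (kronecker_reindex_finProdFinEquiv ..).symm

def comp (hTR : T ⊓ R ≤ S) (E₂ : PreEmbedding k₂ S R) (E₁ : PreEmbedding k₁ T S) :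
    PreEmbedding (k₁ * k₂) T R where
  toFun ι _ _ A := reindex (prodProdFinEquiv ι k₁ k₂) (prodProdFinEquiv ι k₁ k₂)
    (E₂.toFun _ (E₁.toFun ι A))
  proj := reindex finProdFinEquiv finProdFinEquiv (E₁.proj ⊗ₖ E₂.proj)
  hS_conj := E₁.hS_conj
  hR_conj := E₂.hR_conj
  proj_ne_zero := by
    rw [← coe_reindexAlgEquiv ℂ ℂ, ne_eq, map_eq_zero_iff _ (AlgEquiv.injective _)]
    exact kronecker_ne_zero E₁.proj_ne_zero E₂.proj_ne_zero
  proj_herm := by rw [conjTranspose_reindex, conjTranspose_kronecker, E₁.proj_herm, E₂.proj_herm]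
  proj_idem := by
    rw [← coe_reindexAlgEquiv ℂ ℂ, ← _root_.map_mul, ← mul_kronecker_mul, E₁.proj_idem,
      E₂.proj_idem]
  mem_R ι _ _ A hA _ _ := E₂.mem_R _ _ (E₁.mem_R ι A hA) _ _
  map_mul ι _ _ A B hA hB := by
    rw [E₁.map_mul ι A B hA hB, E₂.map_mul _ _ _ (E₁.mem_R ι A hA) (E₁.mem_R ι B hB),
      ← coe_reindexAlgEquiv ℂ ℂ, _root_.map_mul]
  map_add ι _ _ A B hA hB := by
    rw [E₁.map_add ι A B hA hB, E₂.map_add _ _ _ (E₁.mem_R ι A hA) (E₁.mem_R ι B hB),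
      reindex_add]
  map_one ι _ _ := by rw [E₁.map_one, E₂.map_one, ← coe_reindexAlgEquiv ℂ ℂ, _root_.map_one]
  map_conjTranspose ι _ _ A hA := by
    rw [E₁.map_conjTranspose ι A hA, E₂.map_conjTranspose _ _ (E₁.mem_R ι A hA),
      conjTranspose_reindex]
  map_kronecker _ _ _ _ _ _ C A hCR hCT hA := reindex_comp_map_kronecker hTR E₁ E₂ C A hCR hCT hA
  catalytic _ _ _ A hA := reindex_comp_catalytic E₁ E₂ A hA

end PreEmbedding

/-- Proposition `linearconcat`. If `T ∩ R ⊆ S`, the composite of a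
pre-embedding of dimension `k₁` from `T` to `S` with a pre-embedding of dimension `k₂` from
`S` to `R` is a pre-embedding of dimension `k₁ * k₂` from `T` to `R`, with catalytic projector
`Π₁ ⊗ Π₂` (under the canonical identification of `(ι × Fin k₁) × Fin k₂` with
`ι × Fin (k₁ * k₂)`). -/
theorem preEmbedding_concat (k₁ k₂ : ℕ) (R S T : Subring ℂ)
    (hTR : T ⊓ R ≤ S)
    (E₁ : PreEmbedding k₁ T S) (E₂ : PreEmbedding k₂ S R) :
    ∃ E : PreEmbedding (k₁ * k₂) T R,
      (∀ (ι : Type) [Fintype ι] [DecidableEq ι] (A : Matrix ι ι ℂ),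
        (∀ i j, A i j ∈ T) →
        E.toFun ι A =
          Matrix.reindex
            ((Equiv.prodAssoc ι (Fin k₁) (Fin k₂)).trans
              ((Equiv.refl ι).prodCongr finProdFinEquiv))
            ((Equiv.prodAssoc ι (Fin k₁) (Fin k₂)).trans
              ((Equiv.refl ι).prodCongr finProdFinEquiv))
            (E₂.toFun (ι × Fin k₁) (E₁.toFun ι A))) ∧
      E.proj = Matrix.reindex finProdFinEquiv finProdFinEquiv
        (Matrix.kroneckerMap (· * ·) E₁.proj E₂.proj) :=
  ⟨E₂.comp hTR E₁, fun _ _ _ _ _ => rfl, rfl⟩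
end

section
/- Let R and S be subrings of ℂ each closed under complex conjugation, set T = R ∩ S and let F = {a/b : a, b ∈ T, b ≠ 0} ⊆ ℂ. Let Φ be a pre-embedding of dimension k from S to R, let α ∈ S, and set Λ := Φ₀(α), a complex matrix indexed by Fin k with entries in R. Then: (1) Λ is normal, i.e., Λ * Λᴴ = Λᴴ * Λ; (2) for every polynomial q over ℂ all of whose coefficients lie in F and which satisfies q(α) = 0, one has q(Λ) = 0 (evaluating q at the matrix Λ); in particular the minimal polynomial of α over F annihilates Λ; (3) α is an eigenvalue of Λ: there exists a nonzero x : Fin k → ℂ with Λ.mulVec x = α • x; (4) for every natural number d and every family c : Fin d → ℂ with c j ∈ F for all j, if Σ_j (c j) * α^j lies in S, then every entry of the matrix Σ_j (c j) • Λ^j lies in R. -/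
open Matrix

/-! On `S`, `Φ₀` is a ring homomorphism commuting with `ᴴ`, and the Kronecker axiom makes it
`(R ∩ S)`-linear. So `Λ = Φ₀(α)` commutes with `Λᴴ = Φ₀(ᾱ)`, and after clearing a common
denominator in `R ∩ S`, an `F`-linear combination of powers of `Λ` is `Φ₀` of the same
combination of powers of `α`, provided the latter lies in `S`. The catalytic identity
`Λ Π = α Π` makes every nonzero column of `Π` an eigenvector. -/

lemma Subring.exists_mul_mem_of_forall_eq_div {K ι : Type*} [Field K] (T : Subring K)
    (s : Finset ι) {c : ι → K} (hc : ∀ i ∈ s, ∃ a ∈ T, ∃ b ∈ T, b ≠ 0 ∧ c i = a / b) :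
    ∃ b ∈ T, b ≠ 0 ∧ ∀ i ∈ s, b * c i ∈ T := by
  classical
  induction s using Finset.induction_on with
  | empty => exact ⟨1, T.one_mem, one_ne_zero, by simp⟩
  | insert i s _ ih =>
    rw [Finset.forall_mem_insert] at hc
    obtain ⟨⟨a, ha, b₀, hb₀, hb₀_ne, hci⟩, hcs⟩ := hc
    obtain ⟨b, hb, hb_ne, hbs⟩ := ih hcs
    refine ⟨b₀ * b, T.mul_mem hb₀ hb, mul_ne_zero hb₀_ne hb_ne, ?_⟩
    rw [Finset.forall_mem_insert]
    refine ⟨?_, fun j hj => ?_⟩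
    · rw [hci, mul_right_comm, mul_div_cancel₀ _ hb₀_ne]
      exact T.mul_mem ha hb
    · rw [mul_assoc]
      exact T.mul_mem hb₀ (hbs j hj)

lemma Matrix.exists_mulVec_eq_smul_of_mul_eq_smul {n K : Type*} [Fintype n] [Semiring K]
    {M P : Matrix n n K} {a : K} (hMP : M * P = a • P) (hP : P ≠ 0) :
    ∃ x : n → K, x ≠ 0 ∧ M *ᵥ x = a • x := by
  obtain ⟨j, hj⟩ : ∃ j, (fun i => P i j) ≠ 0 := by
    by_contra! h
    exact hP (Matrix.ext fun i j => congrFun (h j) i)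
  refine ⟨fun i => P i j, hj, funext fun i => ?_⟩
  simpa [mul_apply, mulVec, dotProduct] using congrFun (congrFun hMP i) j

namespace PreEmbedding

variable {k : ℕ} {S R : Subring ℂ} (E : PreEmbedding k S R) {α : ℂ}

lemma apply0_eq_reindexAlgEquiv (s : ℂ) :
    E.apply0 s = reindexAlgEquiv ℂ ℂ (Equiv.punitProd (Fin k))
      (E.toFun Unit (of fun _ _ => s)) := rfl

lemma apply0_mem {s : ℂ} (hs : s ∈ S) (p q : Fin k) : E.apply0 s p q ∈ R :=
  E.mem_R Unit _ (fun _ _ => hs) _ _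

lemma apply0_mul {a b : ℂ} (ha : a ∈ S) (hb : b ∈ S) :
    E.apply0 (a * b) = E.apply0 a * E.apply0 b := by
  have hof : (of fun _ _ => a * b : Matrix Unit Unit ℂ) =
      of (fun _ _ => a) * of fun _ _ => b := by
    ext; simp [mul_apply]
  rw [apply0_eq_reindexAlgEquiv, hof, E.map_mul Unit (of fun _ _ => a) (of fun _ _ => b)
    (fun _ _ => ha) (fun _ _ => hb), _root_.map_mul]
  rfl

lemma apply0_add {a b : ℂ} (ha : a ∈ S) (hb : b ∈ S) :
    E.apply0 (a + b) = E.apply0 a + E.apply0 b := by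
  have hof : (of fun _ _ => a + b : Matrix Unit Unit ℂ) = of (fun _ _ => a) + of fun _ _ => b :=
    rfl
  rw [apply0_eq_reindexAlgEquiv, hof, E.map_add Unit (of fun _ _ => a) (of fun _ _ => b)
    (fun _ _ => ha) (fun _ _ => hb), _root_.map_add]
  rfl

lemma apply0_one : E.apply0 1 = 1 := by
  have hof : (of fun _ _ => 1 : Matrix Unit Unit ℂ) = 1 := by
    ext; simp [one_apply]
  rw [apply0_eq_reindexAlgEquiv, hof, E.map_one Unit, _root_.map_one]

lemma apply0_zero : E.apply0 0 = 0 := by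
  simpa using E.apply0_add (zero_mem S) (zero_mem S)

lemma apply0_star {a : ℂ} (ha : a ∈ S) : E.apply0 (star a) = (E.apply0 a)ᴴ := by
  have hof : (of fun _ _ => star a : Matrix Unit Unit ℂ) = (of fun _ _ => a)ᴴ := by
    ext; simp
  rw [apply0, apply0, hof, E.map_conjTranspose Unit (of fun _ _ => a) (fun _ _ => ha),
    conjTranspose_reindex]

lemma apply0_pow {a : ℂ} (ha : a ∈ S) (n : ℕ) : E.apply0 (a ^ n) = E.apply0 a ^ n := by
  induction n with
  | zero => simpa using E.apply0_one
  | succ n ih => rw [pow_succ, pow_succ, E.apply0_mul (pow_mem ha n) ha, ih]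

lemma apply0_sum {ι : Type*} (s : Finset ι) {f : ι → ℂ} (hf : ∀ i ∈ s, f i ∈ S) :
    E.apply0 (∑ i ∈ s, f i) = ∑ i ∈ s, E.apply0 (f i) := by
  classical
  induction s using Finset.induction_on with
  | empty => simpa using E.apply0_zero
  | insert i s hi ih =>
    rw [Finset.forall_mem_insert] at hf
    rw [Finset.sum_insert hi, Finset.sum_insert hi,
      E.apply0_add hf.1 (S.sum_mem hf.2), ih hf.2]

lemma apply0_mul_of_mem_inf {t s : ℂ} (ht : t ∈ R ⊓ S) (hs : s ∈ S) :
    E.apply0 (t * s) = t • E.apply0 s := by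
  -- `[t] ⊗ [s] = [1] ⊗ [t * s]`, and the Kronecker axiom evaluates both sides
  have hkron : kroneckerMap (· * ·) (of fun _ _ => t : Matrix Unit Unit ℂ)
      (of fun _ _ => s : Matrix Unit Unit ℂ) =
      kroneckerMap (· * ·) (of fun _ _ => 1 : Matrix Unit Unit ℂ)
        (of fun _ _ => t * s : Matrix Unit Unit ℂ) := by
    ext; simp
  have h := E.map_kronecker Unit Unit (of fun _ _ => t) (of fun _ _ => s)
    (fun _ _ => ht.1) (fun _ _ => ht.2) (fun _ _ => hs)
  rw [hkron, E.map_kronecker Unit Unit (of fun _ _ => 1) (of fun _ _ => t * s)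
    (fun _ _ => one_mem R) (fun _ _ => one_mem S) (fun _ _ => S.mul_mem ht.2 hs)] at h
  ext p q
  simpa [apply0] using
    congrFun (congrFun ((reindex _ _).injective h) ((), ((), p))) ((), ((), q))

lemma apply0_mul_proj {a : ℂ} (ha : a ∈ S) : E.apply0 a * E.proj = a • E.proj := by
  ext p q
  simpa [mul_apply, Fintype.sum_prod_type, one_apply, apply0] using
    congrFun (congrFun (E.catalytic Unit (of fun _ _ => a) fun _ _ => ha) ((), p)) ((), q)

lemma sum_smul_apply0_pow (hα : α ∈ S) {ι : Type*} (s : Finset ι) {c : ι → ℂ} (n : ι → ℕ)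
    (hc : ∀ i ∈ s, c i ∈ R ⊓ S) :
    ∑ i ∈ s, c i • E.apply0 α ^ n i = E.apply0 (∑ i ∈ s, c i * α ^ n i) := by
  rw [E.apply0_sum s fun i hi => S.mul_mem (hc i hi).2 (pow_mem hα _)]
  refine Finset.sum_congr rfl fun i hi => ?_
  rw [E.apply0_mul_of_mem_inf (hc i hi) (pow_mem hα _), E.apply0_pow hα]

lemma sum_smul_apply0_pow_of_eq_div (hα : α ∈ S) {ι : Type*} (s : Finset ι) {c : ι → ℂ}
    (n : ι → ℕ) (hc : ∀ i ∈ s, ∃ a ∈ R ⊓ S, ∃ b ∈ R ⊓ S, b ≠ 0 ∧ c i = a / b)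
    (hsum : ∑ i ∈ s, c i * α ^ n i ∈ S) :
    ∑ i ∈ s, c i • E.apply0 α ^ n i = E.apply0 (∑ i ∈ s, c i * α ^ n i) := by
  obtain ⟨b, hb, hb_ne, hbc⟩ := (R ⊓ S).exists_mul_mem_of_forall_eq_div s hc
  apply smul_right_injective _ hb_ne
  calc b • ∑ i ∈ s, c i • E.apply0 α ^ n i
      = ∑ i ∈ s, (b * c i) • E.apply0 α ^ n i := by simp only [Finset.smul_sum, smul_smul]
    _ = E.apply0 (∑ i ∈ s, (b * c i) * α ^ n i) := E.sum_smul_apply0_pow hα s n hbc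
    _ = E.apply0 (b * ∑ i ∈ s, c i * α ^ n i) := by simp only [Finset.mul_sum, mul_assoc]
    _ = b • E.apply0 (∑ i ∈ s, c i * α ^ n i) := E.apply0_mul_of_mem_inf hb hsum

end PreEmbedding

theorem preEmbedding_lambda_properties_general (k : ℕ) (R S : Subring ℂ)
    (E : PreEmbedding k S R) (α : ℂ) (hα : α ∈ S) :
    E.apply0 α * (E.apply0 α)ᴴ = (E.apply0 α)ᴴ * E.apply0 α ∧
    (∀ q : Polynomial ℂ,
      (∀ m, q.coeff m ∈ {z : ℂ | ∃ a ∈ R ⊓ S, ∃ b ∈ R ⊓ S, b ≠ 0 ∧ z = a / b}) →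
      q.eval α = 0 → Polynomial.aeval (E.apply0 α) q = 0) ∧
    (∃ x : Fin k → ℂ, x ≠ 0 ∧ (E.apply0 α).mulVec x = α • x) ∧
    (∀ (d : ℕ) (c : Fin d → ℂ),
      (∀ j, c j ∈ {z : ℂ | ∃ a ∈ R ⊓ S, ∃ b ∈ R ⊓ S, b ≠ 0 ∧ z = a / b}) →
      (∑ j, c j * α ^ (j : ℕ)) ∈ S →
      ∀ p q, (∑ j, c j • E.apply0 α ^ (j : ℕ)) p q ∈ R) := by
  have hα_star : star α ∈ S := E.hS_conj α hα
  refine ⟨?normal, ?annihilates, ?eigenvalue, ?integral⟩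
  case normal =>
    rw [← E.apply0_star hα, ← E.apply0_mul hα hα_star, ← E.apply0_mul hα_star hα, mul_comm]
  case annihilates =>
    intro q hq hqα
    have hsum := q.eval_eq_sum_range α
    rw [Polynomial.aeval_eq_sum_range, E.sum_smul_apply0_pow_of_eq_div hα _ _
      (fun m _ => hq m) (by rw [← hsum, hqα]; exact S.zero_mem), ← hsum, hqα, E.apply0_zero]
  case eigenvalue =>
    exact exists_mulVec_eq_smul_of_mul_eq_smul (E.apply0_mul_proj hα) E.proj_ne_zero
  case integral =>
    intro d c hc hsum
    rw [E.sum_smul_apply0_pow_of_eq_div hα _ _ (fun j _ => hc j) hsum]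
    exact E.apply0_mem hsum

/-- Theorem `problem`, forward direction. Let `Φ` be a pre-embedding of
dimension `k` from `S` to `R`, `α ∈ S`, and `Λ = Φ₀(α)`. With
`F = {a/b : a, b ∈ R ∩ S, b ≠ 0}` the field of fractions of `T = R ∩ S`:
(1) `Λ` is normal; (2) every polynomial with coefficients in `F` annihilating `α` annihilates
`Λ`; (3) `α` is an eigenvalue of `Λ`; (4) whenever `Σ_j c_j α^j ∈ S` with all `c_j ∈ F`, the
matrix `Σ_j c_j • Λ^j` has all entries in `R`. -/
theorem preEmbedding_lambda_properties (k : ℕ) (hk : 0 < k) (R S : Subring ℂ)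
    (E : PreEmbedding k S R) (α : ℂ) (hα : α ∈ S) :
    E.apply0 α * (E.apply0 α)ᴴ = (E.apply0 α)ᴴ * E.apply0 α ∧
    (∀ q : Polynomial ℂ,
      (∀ m, q.coeff m ∈ {z : ℂ | ∃ a ∈ R ⊓ S, ∃ b ∈ R ⊓ S, b ≠ 0 ∧ z = a / b}) →
      q.eval α = 0 → Polynomial.aeval (E.apply0 α) q = 0) ∧
    (∃ x : Fin k → ℂ, x ≠ 0 ∧ (E.apply0 α).mulVec x = α • x) ∧
    (∀ (d : ℕ) (c : Fin d → ℂ),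
      (∀ j, c j ∈ {z : ℂ | ∃ a ∈ R ⊓ S, ∃ b ∈ R ⊓ S, b ≠ 0 ∧ z = a / b}) →
      (∑ j, c j * α ^ (j : ℕ)) ∈ S →
      ∀ p q, (∑ j, c j • E.apply0 α ^ (j : ℕ)) p q ∈ R) :=
  preEmbedding_lambda_properties_general k R S E α hα
end

section
/- Let R and S be subrings of ℂ each closed under complex conjugation, set T = R ∩ S and let F = {a/b : a, b ∈ T, b ≠ 0}, a subfield of ℂ. Let α ∈ S be algebraic over F with minimal polynomial p over F of degree d, and assume every element of S can be written as Σ_{j<d} c_j * α^j with all c_j ∈ F. Let K ⊆ ℂ be the splitting field of p over F, assume K is closed under complex conjugation, and assume that every field embedding σ : K → ℂ fixing F pointwise satisfies σ(conj z) = conj(σ z) for all z ∈ K (the Kroneckerian condition). Let Λ be a complex matrix indexed by Fin k all of whose entries lie in R, such that: Λ * Λᴴ = Λᴴ * Λ; p(Λ) = 0 (evaluating p at the matrix Λ); there exists a nonzero x : Fin k → ℂ with Λ.mulVec x = α • x; and for every s ∈ S, writing s = Σ_{j<d} c_j * α^j with c_j ∈ F (this representation is unique), every entry of Σ_{j<d}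 c_j • Λ^j lies in R. Then there exists a pre-embedding Φ of dimension k from S to R with Φ₀(α) = Λ. -/
open Matrix

/-!
Every `s ∈ S` is `q(α)` for some `q ∈ F[X]`, and `Φ` replaces each entry `q(α)` by the block
`q(Λ)`. This is well defined, additive, multiplicative and `F`-linear because the minimal
polynomial `p` of `α` over `F` kills `Λ`. For compatibility with `ᴴ`, write `conj α = g(α)` with
`g ∈ F[X]`: each root `β` of `p` is `σ α` for an `F`-embedding `σ` of the splitting field, so the
Kroneckerian condition gives `g(β) = conj β`; as the spectrum of the normal matrix `Λ` consists
of roots of `p`, the functional calculus yields `Λᴴ = g(Λ)`. The catalytic projector is the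
orthogonal projection onto an `α`-eigenvector of `Λ`.
-/

open Polynomial

theorem Subfield.coe_closure_subring {K : Type*} [Field K] (T : Subring K) :
    (Subfield.closure (T : Set K) : Set K) = {z | ∃ a ∈ T, ∃ b ∈ T, b ≠ 0 ∧ z = a / b} := by
  ext z
  rw [SetLike.mem_coe, Subfield.mem_closure_iff, Subring.closure_eq]
  constructor
  · rintro ⟨a, ha, b, hb, rfl⟩
    obtain rfl | hb0 := eq_or_ne b 0
    · exact ⟨0, T.zero_mem, 1, T.one_mem, one_ne_zero, by simp⟩
    · exact ⟨a, ha, b, hb, hb0, rfl⟩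
  · rintro ⟨a, ha, b, hb, -, rfl⟩
    exact ⟨a, ha, b, hb, rfl⟩

theorem Subfield.apply_mem_closure {K : Type*} [Field K] (f : K →+* K) {s : Set K}
    (hs : ∀ z ∈ s, f z ∈ s) {z : K} (hz : z ∈ Subfield.closure s) :
    f z ∈ Subfield.closure s :=
  (Subfield.closure_le (t := (Subfield.closure s).comap f)).mpr
    (fun _ hy => Subfield.subset_closure (hs _ hy)) hz

theorem Subfield.map_minpoly_eq {L : Type*} [Field L] (F : Subfield L) {x : L} {p : L[X]}
    (hcoeff : ∀ m, p.coeff m ∈ F) (hmonic : p.Monic) (hroot : p.eval x = 0)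
    (hmin : ∀ q : L[X], (∀ m, q.coeff m ∈ F) → q ≠ 0 → q.eval x = 0 → p.degree ≤ q.degree) :
    (minpoly F x).map (algebraMap F L) = p := by
  have hlifts : p ∈ lifts (algebraMap F L) :=
    (lifts_iff_coeff_lifts p).mpr fun m => ⟨⟨_, hcoeff m⟩, rfl⟩
  obtain ⟨p₀, rfl, hdeg, hmonic₀⟩ := lifts_and_degree_eq_and_monic hlifts hmonic
  rw [← minpoly.unique F x hmonic₀ (by rwa [aeval_def, ← eval_map]) fun q hq hqx => ?_]
  rw [hdeg, ← degree_map_eq_of_injective (algebraMap F L).injective q]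
  exact hmin _ (fun m => by rw [coeff_map]; exact (q.coeff m).2) (hq.map _).ne_zero
    (by rwa [eval_map, ← aeval_def])

section aevalTransfer

variable {F A B : Type*} [Field F] [Ring A] [Algebra F A] [Ring B] [Algebra F B]

variable (F) in
/-- On `F[x]` this is the `F`-algebra map sending `x` to `y` (well defined when `y` is a root of
`minpoly F x`); its values off `F[x]` are junk. -/
noncomputable def aevalTransfer (x : A) (y : B) : A → B :=
  fun z => aeval y (Function.invFun (aeval x : F[X] → A) z)

variable {x : A} {y : B} (hy : aeval y (minpoly F x) = 0)
include hy

theorem aevalTransfer_aeval (q : F[X]) : aevalTransfer F x y (aeval x q) = aeval y q := by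
  have hq : aeval x (Function.invFun (aeval x : F[X] → A) (aeval x q) - q) = 0 := by
    rw [map_sub, Function.invFun_eq (f := (aeval x : F[X] → A)) ⟨q, rfl⟩, sub_self]
  obtain ⟨r, hr⟩ := minpoly.dvd F x hq
  rw [← sub_eq_zero, aevalTransfer, ← map_sub, hr, map_mul, hy, zero_mul]

theorem aevalTransfer_sum_smul_pow {ι : Type*} (s : Finset ι) (c : ι → F) (n : ι → ℕ)
    (g : F[X]) :
    aevalTransfer F x y (∑ i ∈ s, c i • aeval x g ^ n i) = ∑ i ∈ s, c i • aeval y g ^ n i := by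
  simpa [Algebra.smul_def] using aevalTransfer_aeval hy (∑ i ∈ s, C (c i) * g ^ n i)

theorem aevalTransfer_one : aevalTransfer F x y 1 = 1 := by
  simpa using aevalTransfer_aeval hy 1

variable {z w : A} (hz : z ∈ Set.range (aeval x : F[X] → A))
include hz

theorem aevalTransfer_smul (c : F) : aevalTransfer F x y (c • z) = c • aevalTransfer F x y z := by
  obtain ⟨q, rfl⟩ := hz
  rw [← map_smul, aevalTransfer_aeval hy, aevalTransfer_aeval hy, map_smul]

variable (hw : w ∈ Set.range (aeval x : F[X] → A))
include hw

theorem aevalTransfer_add :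
    aevalTransfer F x y (z + w) = aevalTransfer F x y z + aevalTransfer F x y w := by
  obtain ⟨q, rfl⟩ := hz
  obtain ⟨r, rfl⟩ := hw
  rw [← map_add, aevalTransfer_aeval hy, aevalTransfer_aeval hy, aevalTransfer_aeval hy, map_add]

theorem aevalTransfer_mul :
    aevalTransfer F x y (z * w) = aevalTransfer F x y z * aevalTransfer F x y w := by
  obtain ⟨q, rfl⟩ := hz
  obtain ⟨r, rfl⟩ := hw
  rw [← map_mul, aevalTransfer_aeval hy, aevalTransfer_aeval hy, aevalTransfer_aeval hy, map_mul]

end aevalTransfer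

theorem Polynomial.aeval_mul_eq_smul_of_mul_eq_smul {R A : Type*} [CommSemiring R]
    [Semiring A] [Algebra R A] {a e : A} {r : R} (h : a * e = r • e) (q : R[X]) :
    aeval a q * e = q.eval r • e := by
  induction q using Polynomial.induction_on' with
  | add f g hf hg => rw [map_add, add_mul, hf, hg, eval_add, add_smul]
  | monomial n c =>
    have hpow : a ^ n * e = r ^ n • e := by
      induction n with
      | zero => simp
      | succ m ih => rw [pow_succ, mul_assoc, h, mul_smul_comm, ih, smul_smul, pow_succ']
    rw [aeval_monomial, eval_monomial, Algebra.smul_def, mul_assoc, hpow, Algebra.smul_def,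
      map_mul, mul_assoc]

open scoped ComplexOrder in
theorem Matrix.exists_projector_mul_eq_smul {𝕜 n : Type*} [RCLike 𝕜] [Fintype n]
    {A : Matrix n n 𝕜} {x : n → 𝕜} (hx : x ≠ 0) {μ : 𝕜} (hAx : A *ᵥ x = μ • x) :
    ∃ P : Matrix n n 𝕜, P ≠ 0 ∧ Pᴴ = P ∧ P * P = P ∧ A * P = μ • P := by
  set c := star x ⬝ᵥ x with hc_def
  have hc : c ≠ 0 := dotProduct_star_self_eq_zero.not.mpr hx
  refine ⟨c⁻¹ • vecMulVec x (star x), smul_ne_zero (inv_ne_zero hc)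
    (vecMulVec_ne_zero hx (star_ne_zero.mpr hx)), ?_, ?_, ?_⟩
  · rw [conjTranspose_smul, conjTranspose_vecMulVec, star_star, star_inv₀, hc_def,
      ← star_dotProduct]
  · rw [smul_mul_smul, vecMulVec_mul_vecMulVec, vecMulVec_smul, ← hc_def, smul_smul,
      mul_assoc, inv_mul_cancel₀ hc, mul_one]
  · rw [mul_smul_comm, mul_vecMulVec, hAx, smul_vecMulVec, smul_comm]

open scoped Matrix.Norms.L2Operator in
theorem Matrix.conjTranspose_eq_aeval_of_commute {n : Type*} [Fintype n] [DecidableEq n]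
    {A : Matrix n n ℂ} (hA : Commute Aᴴ A) {p g : ℂ[X]} (hp : aeval A p = 0)
    (hg : ∀ z, p.IsRoot z → g.eval z = (starRingEnd ℂ) z) : Aᴴ = aeval A g := by
  have : IsStarNormal A := ⟨hA⟩
  have hspec : ∀ z ∈ spectrum ℂ A, p.IsRoot z := by
    intro z hz
    obtain h | h := subsingleton_or_nontrivial (Matrix n n ℂ)
    · simp [spectrum.of_subsingleton] at hz
    · simpa [hp, spectrum.zero_eq] using spectrum.subset_polynomial_aeval A p ⟨z, hz, rfl⟩
  rw [← cfc_polynomial g A, ← star_eq_conjTranspose, ← cfc_star_id (R := ℂ) A]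
  exact cfc_congr fun z hz => (hg z (hspec z hz)).symm

theorem IntermediateField.isAlgebraic_of_forall_roots_mem {F L : Type*} [Field F] [Field L]
    [Algebra F L] {E : IntermediateField F L} {p : F[X]}
    (hE : ∀ E' : IntermediateField F L, (∀ z ∈ (p.map (algebraMap F L)).roots, z ∈ E') →
      E ≤ E') :
    Algebra.IsAlgebraic F E := by
  classical
  have hroots : Algebra.IsAlgebraic F (adjoin F (p.rootSet L)) :=
    isAlgebraic_adjoin fun z hz => (isAlgebraic_of_mem_rootSet hz).isIntegral
  have hle : E ≤ adjoin F (p.rootSet L) := hE _ fun z hz =>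
    subset_adjoin F _ (by rwa [rootSet, aroots, Finset.mem_coe, Multiset.mem_toFinset])
  exact Algebra.IsAlgebraic.of_injective (inclusion hle) (inclusion_injective hle)

theorem IntermediateField.aeval_eq_conj_of_kroneckerian {F : Type*} [Field F] [Algebra F ℂ]
    {E : IntermediateField F ℂ} [Algebra.IsAlgebraic F E]
    (hEconj : ∀ z ∈ E, (starRingEnd ℂ) z ∈ E)
    (hKron : ∀ (σ : E →ₐ[F] ℂ) (z : ℂ) (hz : z ∈ E),
      σ ⟨(starRingEnd ℂ) z, hEconj z hz⟩ = (starRingEnd ℂ) (σ ⟨z, hz⟩))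
    {α : ℂ} (hα : α ∈ E) {g : F[X]} (hg : aeval α g = (starRingEnd ℂ) α)
    {β : ℂ} (hβ : aeval β (minpoly F α) = 0) : aeval β g = (starRingEnd ℂ) β := by
  obtain ⟨σ, hσ⟩ : ∃ σ : E →ₐ[F] ℂ, σ ⟨α, hα⟩ = β := by
    refine (Algebra.IsAlgebraic.range_eval_eq_rootSet_minpoly ℂ (⟨α, hα⟩ : E)).symm.subset ?_
    rw [mem_rootSet]
    exact ⟨minpoly.ne_zero (Algebra.IsAlgebraic.isAlgebraic (⟨α, hα⟩ : E)).isIntegral,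
      by rwa [minpoly_eq]⟩
  have hconj : (⟨(starRingEnd ℂ) α, hEconj α hα⟩ : E) = aeval ⟨α, hα⟩ g :=
    Subtype.ext (hg.symm.trans (aeval_algebraMap_apply ℂ (⟨α, hα⟩ : E) g))
  calc aeval β g = σ (aeval ⟨α, hα⟩ g) := by rw [← hσ, aeval_algHom_apply]
    _ = (starRingEnd ℂ) (σ ⟨α, hα⟩) := by rw [← hconj, hKron]
    _ = (starRingEnd ℂ) β := by rw [hσ]

theorem Matrix.conjTranspose_eq_aeval_of_kroneckerian {n F : Type*} [Fintype n] [DecidableEq n]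
    [Field F] [Algebra F ℂ] {E : IntermediateField F ℂ} [Algebra.IsAlgebraic F E]
    (hEconj : ∀ z ∈ E, (starRingEnd ℂ) z ∈ E)
    (hKron : ∀ (σ : E →ₐ[F] ℂ) (z : ℂ) (hz : z ∈ E),
      σ ⟨(starRingEnd ℂ) z, hEconj z hz⟩ = (starRingEnd ℂ) (σ ⟨z, hz⟩))
    {α : ℂ} (hα : α ∈ E) {g : F[X]} (hg : aeval α g = (starRingEnd ℂ) α)
    {Λ : Matrix n n ℂ} (hΛ : Commute Λᴴ Λ) (hΛmin : aeval Λ (minpoly F α) = 0) :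
    Λᴴ = aeval Λ g := by
  rw [← aeval_map_algebraMap ℂ] at hΛmin ⊢
  refine conjTranspose_eq_aeval_of_commute hΛ hΛmin fun z hz => ?_
  rw [IsRoot, eval_map_algebraMap] at hz
  rw [eval_map_algebraMap]
  exact IntermediateField.aeval_eq_conj_of_kroneckerian hEconj hKron hα hg hz

section AdditiveOn

variable {A M σ : Type*} [AddCommMonoid A] [AddCancelCommMonoid M] [SetLike σ A]
  [AddSubmonoidClass σ A] {S : σ} (f : A → M) (hadd : ∀ s ∈ S, ∀ t ∈ S, f (s + t) = f s + f t)
include hadd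

theorem map_zero_of_forall_map_add : f 0 = 0 := by
  simpa using hadd 0 (zero_mem S) 0 (zero_mem S)

theorem map_sum_of_forall_map_add {ι : Type*} (t : Finset ι) {g : ι → A} (hg : ∀ i, g i ∈ S) :
    f (∑ i ∈ t, g i) = ∑ i ∈ t, f (g i) := by
  induction t using Finset.cons_induction with
  | empty => simpa using map_zero_of_forall_map_add f hadd
  | cons a t _ ih =>
    rw [Finset.sum_cons, Finset.sum_cons, hadd _ (hg a) _ (sum_mem fun i _ => hg i), ih]

end AdditiveOn

namespace PreEmbedding

variable {k : ℕ} {S R : Subring ℂ} (hS : ∀ z ∈ S, (starRingEnd ℂ) z ∈ S)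
  (hR : ∀ z ∈ R, (starRingEnd ℂ) z ∈ R) (φ : ℂ → Matrix (Fin k) (Fin k) ℂ)
  (P : Matrix (Fin k) (Fin k) ℂ) (hP0 : P ≠ 0) (hPH : Pᴴ = P) (hPP : P * P = P)
  (hmem : ∀ s ∈ S, ∀ i j, φ s i j ∈ R)
  (hadd : ∀ s ∈ S, ∀ t ∈ S, φ (s + t) = φ s + φ t)
  (hmul : ∀ s ∈ S, ∀ t ∈ S, φ (s * t) = φ s * φ t) (hone : φ 1 = 1)
  (hconj : ∀ s ∈ S, φ ((starRingEnd ℂ) s) = (φ s)ᴴ)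
  (hsmul : ∀ t ∈ R ⊓ S, ∀ s ∈ S, φ (t * s) = t • φ s)
  (hP : ∀ s ∈ S, φ s * P = s • P)

noncomputable def ofEntrywise : PreEmbedding k S R where
  toFun ι _ _ A := Matrix.comp ι ι (Fin k) (Fin k) ℂ (A.map φ)
  proj := P
  hS_conj := hS
  hR_conj := hR
  proj_ne_zero := hP0
  proj_herm := hPH
  proj_idem := hPP
  mem_R ι _ _ A hA p q := hmem _ (hA p.1 q.1) p.2 q.2
  map_mul ι _ _ A B hA hB := by
    rw [← compRingEquiv_apply, ← compRingEquiv_apply, ← compRingEquiv_apply, ← _root_.map_mul]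
    congr 1
    refine Matrix.ext fun i j => ?_
    simp only [map_apply, mul_apply]
    rw [map_sum_of_forall_map_add φ hadd _ fun m => S.mul_mem (hA i m) (hB m j)]
    exact Finset.sum_congr rfl fun m _ => hmul _ (hA i m) _ (hB m j)
  map_add ι _ _ A B hA hB := by
    ext ⟨i, a⟩ ⟨j, b⟩
    simp [hadd _ (hA i j) _ (hB i j)]
  map_one ι _ _ := by
    rw [Matrix.map_one φ (map_zero_of_forall_map_add φ hadd) hone, Matrix.comp_one]
  map_conjTranspose ι _ _ A hA := by
    ext ⟨i, a⟩ ⟨j, b⟩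
    simp [hconj _ (hA j i)]
  map_kronecker ι κ _ _ _ _ C A hCR hCS hA := by
    ext ⟨⟨i, m⟩, a⟩ ⟨⟨j, n⟩, b⟩
    simp [kroneckerMap_apply, hsmul _ ⟨hCR i j, hCS i j⟩ _ (hA m n)]
  catalytic ι _ _ A hA := by
    ext ⟨i, a⟩ ⟨j, b⟩
    have := congrFun (congrFun (hP _ (hA i j)) a) b
    simp only [mul_apply, Matrix.smul_apply, smul_eq_mul] at this
    simp [mul_apply, Fintype.sum_prod_type, kroneckerMap_apply, one_apply, this]

theorem ofEntrywise_apply0 (s : ℂ) :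
    (ofEntrywise hS hR φ P hP0 hPH hPP hmem hadd hmul hone hconj hsmul hP).apply0 s = φ s :=
  rfl

end PreEmbedding

theorem exists_preEmbedding_of_conjTranspose_eq_aeval {k d : ℕ} {R S : Subring ℂ}
    (hR : ∀ z ∈ R, (starRingEnd ℂ) z ∈ R) (hS : ∀ z ∈ S, (starRingEnd ℂ) z ∈ S)
    {F : Subfield ℂ} (hTF : ∀ t ∈ R ⊓ S, t ∈ F) (hFconj : ∀ z ∈ F, (starRingEnd ℂ) z ∈ F)
    {α : ℂ} (hSgen : ∀ s ∈ S, ∃ c : Fin d → F, s = ∑ j, c j • α ^ (j : ℕ))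
    {Λ : Matrix (Fin k) (Fin k) ℂ} (hΛmin : aeval Λ (minpoly F α) = 0)
    {g : F[X]} (hg : aeval α g = (starRingEnd ℂ) α) (hΛg : Λᴴ = aeval Λ g)
    (hΛcoeffs : ∀ c : Fin d → F, ∑ j, c j • α ^ (j : ℕ) ∈ S →
      ∀ i j, (∑ j', c j' • Λ ^ (j' : ℕ)) i j ∈ R)
    {P : Matrix (Fin k) (Fin k) ℂ} (hP0 : P ≠ 0) (hPH : Pᴴ = P) (hPP : P * P = P)
    (hΛP : Λ * P = α • P) :
    ∃ E : PreEmbedding k S R, E.apply0 α = Λ := by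
  set φ := aevalTransfer F α Λ with hφ
  have hrange : ∀ s ∈ S, s ∈ Set.range (aeval α : F[X] → ℂ) := by
    intro s hs
    obtain ⟨c, rfl⟩ := hSgen s hs
    exact ⟨∑ j, C (c j) * X ^ (j : ℕ), by simp [Algebra.smul_def]⟩
  have hφsum (c : Fin d → F) : φ (∑ j, c j • α ^ (j : ℕ)) = ∑ j, c j • Λ ^ (j : ℕ) := by
    simpa using aevalTransfer_sum_smul_pow hΛmin Finset.univ c (fun j => (j : ℕ)) X
  have hmem : ∀ s ∈ S, ∀ i j, φ s i j ∈ R := by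
    intro s hs
    obtain ⟨c, rfl⟩ := hSgen s hs
    rw [hφsum]
    exact hΛcoeffs c hs
  have hconj : ∀ s ∈ S, φ ((starRingEnd ℂ) s) = (φ s)ᴴ := by
    intro s hs
    obtain ⟨c, rfl⟩ := hSgen s hs
    set c' : Fin d → F := fun j => ⟨(starRingEnd ℂ) (c j), hFconj _ (c j).2⟩
    have hconj_sum : (starRingEnd ℂ) (∑ j, c j • α ^ (j : ℕ)) =
        ∑ j, c' j • aeval α g ^ (j : ℕ) := by
      simp [hg, Subfield.smul_def, c']
    rw [hconj_sum, hφsum, hφ, aevalTransfer_sum_smul_pow hΛmin, ← hΛg, conjTranspose_sum]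
    simp [Subfield.smul_def, conjTranspose_smul, conjTranspose_pow, c']
  have hsmul : ∀ t ∈ R ⊓ S, ∀ s ∈ S, φ (t * s) = t • φ s := fun t ht s hs =>
    aevalTransfer_smul hΛmin (hrange s hs) ⟨t, hTF t ht⟩
  have hP : ∀ s ∈ S, φ s * P = s • P := by
    intro s hs
    obtain ⟨q, rfl⟩ := hrange s hs
    rw [hφ, aevalTransfer_aeval hΛmin, ← aeval_map_algebraMap ℂ,
      aeval_mul_eq_smul_of_mul_eq_smul hΛP, eval_map_algebraMap]
  refine ⟨PreEmbedding.ofEntrywise hS hR φ P hP0 hPH hPP hmem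
    (fun s hs t ht => aevalTransfer_add hΛmin (hrange s hs) (hrange t ht))
    (fun s hs t ht => aevalTransfer_mul hΛmin (hrange s hs) (hrange t ht))
    (aevalTransfer_one hΛmin) hconj hsmul hP, ?_⟩
  rw [PreEmbedding.ofEntrywise_apply0]
  simpa using aevalTransfer_aeval hΛmin X

theorem preEmbedding_of_pseudoCompanion_general (k : ℕ) (R S : Subring ℂ)
    (hR : ∀ z ∈ R, (starRingEnd ℂ) z ∈ R) (hS : ∀ z ∈ S, (starRingEnd ℂ) z ∈ S)
    (F : Set ℂ) (hF : F = {z : ℂ | ∃ a ∈ R ⊓ S, ∃ b ∈ R ⊓ S, b ≠ 0 ∧ z = a / b})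
    (α : ℂ) (hα : α ∈ S)
    (p : Polynomial ℂ) (d : ℕ)
    (hp_monic : p.Monic) (hp_coeff : ∀ m, p.coeff m ∈ F) (hp_root : p.eval α = 0)
    (hp_min : ∀ q : Polynomial ℂ, (∀ m, q.coeff m ∈ F) → q ≠ 0 → q.eval α = 0 →
      p.degree ≤ q.degree)
    (hSgen : ∀ s ∈ S, ∃ c : Fin d → ℂ, (∀ j, c j ∈ F) ∧ s = ∑ j, c j * α ^ (j : ℕ))
    (K : Subfield ℂ)
    (hFK : F ⊆ (K : Set ℂ))
    (hroots : ∀ z ∈ p.roots, z ∈ K)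
    (hKmin : ∀ K' : Subfield ℂ, F ⊆ (K' : Set ℂ) → (∀ z ∈ p.roots, z ∈ K') → K ≤ K')
    (hKconj : ∀ z ∈ K, (starRingEnd ℂ) z ∈ K)
    (hKron : ∀ σ : K →+* ℂ, (∀ x : K, (x : ℂ) ∈ F → σ x = (x : ℂ)) →
      ∀ (z : ℂ) (hz : z ∈ K),
        σ ⟨(starRingEnd ℂ) z, hKconj z hz⟩ = (starRingEnd ℂ) (σ ⟨z, hz⟩))
    (Λ : Matrix (Fin k) (Fin k) ℂ)
    (hΛnormal : Λ * Λᴴ = Λᴴ * Λ)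
    (hΛp : Polynomial.aeval Λ p = 0)
    (hΛeig : ∃ x : Fin k → ℂ, x ≠ 0 ∧ Λ.mulVec x = α • x)
    (hΛcoeffs : ∀ c : Fin d → ℂ, (∀ j, c j ∈ F) → (∑ j, c j * α ^ (j : ℕ)) ∈ S →
      ∀ i j, (∑ j', c j' • Λ ^ (j' : ℕ)) i j ∈ R) :
    ∃ E : PreEmbedding k S R, E.apply0 α = Λ := by
  rw [← Subfield.coe_closure_subring] at hF
  subst hF
  set F := Subfield.closure ((R ⊓ S : Subring ℂ) : Set ℂ)
  have hFconj : ∀ z ∈ F, (starRingEnd ℂ) z ∈ F :=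
    fun _ => Subfield.apply_mem_closure (starRingEnd ℂ) (s := ((R ⊓ S : Subring ℂ) : Set ℂ))
      fun t ht => ⟨hR t ht.1, hS t ht.2⟩
  have hpmin := F.map_minpoly_eq hp_coeff hp_monic hp_root hp_min
  have hΛmin : aeval Λ (minpoly F α) = 0 := by rw [← aeval_map_algebraMap ℂ, hpmin, hΛp]
  have hSgen' : ∀ s ∈ S, ∃ c : Fin d → F, s = ∑ j, c j • α ^ (j : ℕ) := fun s hs => by
    obtain ⟨c, hc, rfl⟩ := hSgen s hs
    exact ⟨fun j => ⟨c j, hc j⟩, rfl⟩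
  obtain ⟨c, hcα⟩ := hSgen' _ (hS α hα)
  set g : F[X] := ∑ j, C (c j) * X ^ (j : ℕ)
  have hg : aeval α g = (starRingEnd ℂ) α := by simp [g, hcα, Algebra.smul_def]
  set E := K.toIntermediateField fun x : F => hFK x.2
  have : Algebra.IsAlgebraic F E := IntermediateField.isAlgebraic_of_forall_roots_mem
    fun E' hE' => hKmin E'.toSubfield (fun z hz => E'.algebraMap_mem ⟨z, hz⟩) (hpmin ▸ hE')
  have hΛg : Λᴴ = aeval Λ g := Matrix.conjTranspose_eq_aeval_of_kroneckerian (E := E) hKconj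
    (fun σ => hKron σ.toRingHom fun y hy => σ.commutes ⟨_, hy⟩)
    (hroots α ((mem_roots hp_monic.ne_zero).mpr hp_root)) hg hΛnormal.symm hΛmin
  obtain ⟨x, hx0, hxeig⟩ := hΛeig
  obtain ⟨P, hP0, hPH, hPP, hΛP⟩ := Matrix.exists_projector_mul_eq_smul hx0 hxeig
  exact exists_preEmbedding_of_conjTranspose_eq_aeval hR hS (fun t ht => Subfield.subset_closure ht)
    hFconj hSgen' hΛmin hg hΛg (fun c hc => hΛcoeffs _ (fun j => (c j).2) hc) hP0 hPH
    hPP hΛP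

/-- Theorem `problem`, converse direction. Given a normal matrix `Λ` over
`R` annihilated by the minimal polynomial `p` of `α` over `F = Frac(R ∩ S)`, having `α` as an
eigenvalue and satisfying the integrality condition on `F`-linear combinations of its powers,
and assuming the splitting field `K` of `p` over `F` is Kroneckerian, there exists a
pre-embedding `Φ` of dimension `k` from `S` to `R` with `Φ₀(α) = Λ`. -/
theorem preEmbedding_of_pseudoCompanion (k : ℕ) (R S : Subring ℂ)
    (hR : ∀ z ∈ R, (starRingEnd ℂ) z ∈ R) (hS : ∀ z ∈ S, (starRingEnd ℂ) z ∈ S)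
    (F : Set ℂ) (hF : F = {z : ℂ | ∃ a ∈ R ⊓ S, ∃ b ∈ R ⊓ S, b ≠ 0 ∧ z = a / b})
    (α : ℂ) (hα : α ∈ S)
    (p : Polynomial ℂ) (d : ℕ)
    (hp_monic : p.Monic) (hp_coeff : ∀ m, p.coeff m ∈ F) (hp_root : p.eval α = 0)
    (hp_deg : p.natDegree = d)
    (hp_min : ∀ q : Polynomial ℂ, (∀ m, q.coeff m ∈ F) → q ≠ 0 → q.eval α = 0 →
      p.degree ≤ q.degree)
    (hSgen : ∀ s ∈ S, ∃ c : Fin d → ℂ, (∀ j, c j ∈ F) ∧ s = ∑ j, c j * α ^ (j : ℕ))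
    (K : Subfield ℂ)
    (hFK : F ⊆ (K : Set ℂ))
    (hroots : ∀ z ∈ p.roots, z ∈ K)
    (hKmin : ∀ K' : Subfield ℂ, F ⊆ (K' : Set ℂ) → (∀ z ∈ p.roots, z ∈ K') → K ≤ K')
    (hKconj : ∀ z ∈ K, (starRingEnd ℂ) z ∈ K)
    (hKron : ∀ σ : K →+* ℂ, (∀ x : K, (x : ℂ) ∈ F → σ x = (x : ℂ)) →
      ∀ (z : ℂ) (hz : z ∈ K),
        σ ⟨(starRingEnd ℂ) z, hKconj z hz⟩ = (starRingEnd ℂ) (σ ⟨z, hz⟩))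
    (Λ : Matrix (Fin k) (Fin k) ℂ)
    (hΛR : ∀ i j, Λ i j ∈ R)
    (hΛnormal : Λ * Λᴴ = Λᴴ * Λ)
    (hΛp : Polynomial.aeval Λ p = 0)
    (hΛeig : ∃ x : Fin k → ℂ, x ≠ 0 ∧ Λ.mulVec x = α • x)
    (hΛcoeffs : ∀ c : Fin d → ℂ, (∀ j, c j ∈ F) → (∑ j, c j * α ^ (j : ℕ)) ∈ S →
      ∀ i j, (∑ j', c j' • Λ ^ (j' : ℕ)) i j ∈ R) :
    ∃ E : PreEmbedding k S R, E.apply0 α = Λ :=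
  preEmbedding_of_pseudoCompanion_general k R S hR hS F hF α hα p d hp_monic hp_coeff hp_root hp_min
    hSgen K hFK hroots hKmin hKconj hKron Λ hΛnormal hΛp hΛeig hΛcoeffs
end
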